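/- arXiv:2203.04184 — 3 statements merged into one kernel-verified Lean document; each statement's English description precedes it below -/
import Mathlib

section
/- Let φ = (√5 - 1)/2. Then Li_2(φ) = π^2/10 - (ln φ)^2, where Li_2(x) = ∑_{n=1}^∞ x^n/n^2. -/
/-!
Termwise differentiation gives `Li₂'(x) = -log(1 - x) / x` on `(-1, 1)`. Hence
`Li₂(x) + Li₂(1 - x) + log x · log(1 - x)` (Euler) and `Li₂(x) + Li₂(-x/(1 - x)) + ½ log²(1 - x)`
(Landen) have zero derivative, and their constant values `ζ(2) = π²/6` and `0` are read off at
`x → 1` and `x → 0`. Comparing the series also gives `Li₂(x²) = 2 Li₂(x) + 2 Li₂(-x)`.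
For `x = φ`, where `1 - φ = φ²`, Euler at `φ`, Landen at `φ²` and duplication at `φ` are three
linear equations in `Li₂(φ)`, `Li₂(φ²)`, `Li₂(-φ)`, and solving them gives the value.
-/

open Real Finset

noncomputable def H (n : ℕ) : ℝ := ∑ k ∈ Finset.range n, 1 / ((k : ℝ) + 1)

noncomputable def H2 (n : ℕ) : ℝ := ∑ k ∈ Finset.range n, 1 / ((k : ℝ) + 1) ^ 2

noncomputable def zeta11 (n : ℕ) : ℝ :=
  ∑ k ∈ Finset.range n, ∑ j ∈ Finset.range k, 1 / (((k : ℝ) + 1) * ((j : ℝ) + 1))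

noncomputable def Li (m : ℕ) (x : ℝ) : ℝ := ∑' n : ℕ, x ^ (n + 1) / ((n : ℝ) + 1) ^ m

noncomputable def Li21 (x : ℝ) : ℝ := ∑' n : ℕ, x ^ (n + 1) * H n / ((n : ℝ) + 1) ^ 2

noncomputable def Li31 (x : ℝ) : ℝ := ∑' n : ℕ, x ^ (n + 1) * H n / ((n : ℝ) + 1) ^ 3

noncomputable def zeta3 : ℝ := ∑' n : ℕ, 1 / ((n : ℝ) + 1) ^ 3

noncomputable def zeta31 : ℝ := ∑' n : ℕ, H n / ((n : ℝ) + 1) ^ 3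

open Filter Topology

lemma summable_one_div_succ_sq : Summable (fun n : ℕ => 1 / ((n : ℝ) + 1) ^ 2) := by
  have h := (summable_nat_add_iff 1).2 ((Real.summable_one_div_nat_pow (p := 2)).2 one_lt_two)
  exact h.congr fun n => by push_cast; ring

lemma norm_pow_succ_div_succ_sq_le {x : ℝ} (hx : |x| ≤ 1) (n : ℕ) :
    ‖x ^ (n + 1) / ((n : ℝ) + 1) ^ 2‖ ≤ 1 / ((n : ℝ) + 1) ^ 2 := by
  rw [norm_div, norm_pow, norm_pow, Real.norm_eq_abs, Real.norm_eq_abs,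
    abs_of_pos (by positivity : (0 : ℝ) < n + 1)]
  gcongr
  exact pow_le_one₀ (abs_nonneg x) hx

lemma hasSum_Li_two {x : ℝ} (hx : |x| ≤ 1) :
    HasSum (fun n : ℕ => x ^ (n + 1) / ((n : ℝ) + 1) ^ 2) (Li 2 x) :=
  (summable_one_div_succ_sq.of_norm_bounded (norm_pow_succ_div_succ_sq_le hx)).hasSum

lemma continuousOn_Li_two : ContinuousOn (Li 2) (Set.Icc (-1) 1) :=
  continuousOn_tsum (fun _ => (continuousOn_id.pow _).div_const _) summable_one_div_succ_sq
    fun n _ hx => norm_pow_succ_div_succ_sq_le (abs_le.2 hx) n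

lemma Li_two_zero : Li 2 0 = 0 := by
  simp [Li]

lemma Li_two_one : Li 2 1 = π ^ 2 / 6 := by
  have h := (hasSum_nat_add_iff' 1).2 hasSum_zeta_two
  simp only [Finset.range_one, Finset.sum_singleton, Nat.cast_zero] at h
  norm_num at h
  exact (h.congr_fun fun n => by norm_num).tsum_eq

lemma hasDerivAt_Li_two_tsum {x : ℝ} (hx : |x| < 1) :
    HasDerivAt (Li 2) (∑' n : ℕ, x ^ n / ((n : ℝ) + 1)) x := by
  set r : ℝ := (1 + |x|) / 2 with hr
  have hxr : x ∈ Metric.ball (0 : ℝ) r := by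
    rw [Metric.mem_ball, Real.dist_eq, sub_zero]; linarith [hr]
  refine hasDerivAt_tsum_of_isPreconnected
    (g := fun (n : ℕ) (y : ℝ) => y ^ (n + 1) / ((n : ℝ) + 1) ^ 2)
    (g' := fun (n : ℕ) (y : ℝ) => y ^ n / ((n : ℝ) + 1))
    (summable_geometric_of_lt_one (r := r) (by positivity) (by linarith [hr]))
    Metric.isOpen_ball (convex_ball 0 r).isPreconnected (fun n y _ => ?_) (fun n y hy => ?_)
    hxr (hasSum_Li_two hx.le).summable hxr
  · refine ((hasDerivAt_pow (n + 1) y).div_const (((n : ℝ) + 1) ^ 2)).congr_deriv ?_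
    rw [Nat.add_sub_cancel]
    field_simp
    push_cast
    ring
  · rw [Metric.mem_ball, Real.dist_eq, sub_zero] at hy
    rw [norm_div, norm_pow, Real.norm_eq_abs, Real.norm_eq_abs,
      abs_of_pos (by positivity : (0 : ℝ) < n + 1)]
    calc |y| ^ n / ((n : ℝ) + 1) ≤ |y| ^ n := div_le_self (by positivity) (by simp)
      _ ≤ r ^ n := pow_le_pow_left₀ (abs_nonneg y) hy.le n

lemma hasDerivAt_Li_two {x : ℝ} (hx : |x| < 1) (hx0 : x ≠ 0) :
    HasDerivAt (Li 2) (-log (1 - x) / x) x := by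
  have hsum : HasSum (fun n : ℕ => x * (x ^ n / ((n : ℝ) + 1))) (x * (-log (1 - x) / x)) := by
    rw [mul_div_cancel₀ _ hx0]
    exact (Real.hasSum_pow_div_log_of_abs_lt_one hx).congr_fun fun n => by ring
  simpa only [((hasSum_mul_left_iff hx0).1 hsum).tsum_eq] using hasDerivAt_Li_two_tsum hx

lemma Li_two_sq {x : ℝ} (hx : |x| ≤ 1) : Li 2 (x ^ 2) = 2 * Li 2 x + 2 * Li 2 (-x) := by
  set f : ℕ → ℝ := fun n => 2 * (x ^ (n + 1) / ((n : ℝ) + 1) ^ 2)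
    + 2 * ((-x) ^ (n + 1) / ((n : ℝ) + 1) ^ 2)
  have hf : HasSum f (2 * Li 2 x + 2 * Li 2 (-x)) :=
    ((hasSum_Li_two hx).mul_left 2).add ((hasSum_Li_two (by rwa [abs_neg])).mul_left 2)
  have hodd : ∀ n ∉ Set.range (fun m : ℕ => 2 * m + 1), f n = 0 := by
    intro n hn
    have hn : Odd (n + 1) := by
      rcases Nat.even_or_odd n with ⟨k, rfl⟩ | ⟨k, rfl⟩
      · exact ⟨k, by ring⟩
      · exact absurd ⟨k, rfl⟩ hn
    simp only [f, hn.neg_pow]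
    ring
  have hsq : HasSum (f ∘ fun m : ℕ => 2 * m + 1) (Li 2 (x ^ 2)) := by
    refine (hasSum_Li_two (by rw [abs_pow]; exact pow_le_one₀ (abs_nonneg x) hx)).congr_fun
      fun m => ?_
    simp only [f, Function.comp, show 2 * m + 1 + 1 = 2 * (m + 1) by ring,
      (even_two_mul (m + 1)).neg_pow, pow_mul]
    push_cast
    field_simp
    ring
  have hinj : Function.Injective fun m : ℕ => 2 * m + 1 := fun a b h => by simpa using h
  exact ((hinj.hasSum_iff hodd).1 hsq).unique hf

lemma tendsto_log_mul_log_one_sub : Tendsto (fun z => log z * log (1 - z)) (𝓝 1) (𝓝 0) := by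
  have hbig : (fun z => log z * log (1 - z)) =O[𝓝 1] fun z => (z - 1) * log (1 - z) := by
    simpa using (Real.hasDerivAt_log one_ne_zero).isBigO_sub.mul (Asymptotics.isBigO_refl _ _)
  refine hbig.trans_tendsto ?_
  have hc : Continuous fun z : ℝ => (z - 1) * log (1 - z) := by
    convert (Real.continuous_mul_log.comp (continuous_sub_left (1 : ℝ))).neg using 1
    ext z
    simp only [Function.comp, Pi.neg_apply]
    ring
  simpa using hc.tendsto 1

lemma eq_of_hasDerivAt_eq_zero_of_tendsto {f : ℝ → ℝ} {s : Set ℝ} {l : Filter ℝ} [l.NeBot]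
    {L x : ℝ} (hs : IsOpen s) (hs' : IsPreconnected s) (hf : ∀ y ∈ s, HasDerivAt f 0 y)
    (hls : s ∈ l) (hl : Tendsto f l (𝓝 L)) (hx : x ∈ s) : f x = L := by
  have hconst : ∀ y ∈ s, f y = f x := fun y hy =>
    hs.is_const_of_deriv_eq_zero hs'
      (fun z hz => (hf z hz).differentiableAt.differentiableWithinAt)
      (fun z hz => (hf z hz).deriv) hy hx
  exact tendsto_nhds_unique
    (tendsto_const_nhds.congr' (eventually_of_mem hls fun y hy => (hconst y hy).symm)) hl

lemma hasDerivAt_Li_two_add_Li_two_one_sub {y : ℝ} (hy : y ∈ Set.Ioo 0 1) :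
    HasDerivAt (fun z => Li 2 z + Li 2 (1 - z) + log z * log (1 - z)) 0 y := by
  obtain ⟨hy0, hy1⟩ := hy
  have h1y : 1 - y ≠ 0 := by linarith
  have hsub : HasDerivAt (fun z : ℝ => 1 - z) (-1) y := by
    simpa using (hasDerivAt_id y).const_sub 1
  have hLi := hasDerivAt_Li_two (abs_lt.2 ⟨by linarith, hy1⟩) hy0.ne'
  have hLi_sub := (hasDerivAt_Li_two (abs_lt.2 ⟨by linarith, by linarith⟩) h1y).comp y hsub
  have hlog := (Real.hasDerivAt_log hy0.ne').mul ((Real.hasDerivAt_log h1y).comp y hsub)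
  refine ((hLi.add hLi_sub).add hlog).congr_deriv ?_
  simp only [Function.comp, sub_sub_cancel]
  field_simp
  ring

lemma hasDerivAt_Li_two_add_Li_two_neg_div_one_sub {y : ℝ} (hy : y ∈ Set.Ioo 0 (1 / 2)) :
    HasDerivAt (fun z => Li 2 z + Li 2 (-z / (1 - z)) + log (1 - z) ^ 2 / 2) 0 y := by
  obtain ⟨hy0, hy1⟩ := hy
  have h1y : 0 < 1 - y := by linarith
  have hsub : HasDerivAt (fun z : ℝ => 1 - z) (-1) y := by
    simpa using (hasDerivAt_id y).const_sub 1
  have hw : -y / (1 - y) ≠ 0 := div_ne_zero (neg_ne_zero.2 hy0.ne') h1y.ne'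
  have hw1 : |-y / (1 - y)| < 1 := by
    rw [abs_div, abs_neg, abs_of_pos hy0, abs_of_pos h1y, div_lt_one h1y]
    linarith
  have hLi := hasDerivAt_Li_two (abs_lt.2 ⟨by linarith, by linarith⟩) hy0.ne'
  have hLi_w := (hasDerivAt_Li_two hw1 hw).comp y ((hasDerivAt_id y).neg.div hsub h1y.ne')
  have hlog := (((Real.hasDerivAt_log h1y.ne').comp y hsub).pow 2).div_const 2
  refine ((hLi.add hLi_w).add hlog).congr_deriv ?_
  simp only [Function.comp, Pi.neg_apply, id]
  rw [show 1 - -y / (1 - y) = (1 - y)⁻¹ by field_simp; ring, Real.log_inv]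
  field_simp
  ring

lemma Li_two_add_Li_two_one_sub {x : ℝ} (hx : x ∈ Set.Ioo 0 1) :
    Li 2 x + Li 2 (1 - x) + log x * log (1 - x) = π ^ 2 / 6 := by
  refine eq_of_hasDerivAt_eq_zero_of_tendsto
    (f := fun z => Li 2 z + Li 2 (1 - z) + log z * log (1 - z))
    isOpen_Ioo isPreconnected_Ioo (fun y hy => hasDerivAt_Li_two_add_Li_two_one_sub hy)
    (Ioo_mem_nhdsLT one_pos) ?_ hx
  have hLi_one : Tendsto (Li 2) (𝓝[<] 1) (𝓝 (Li 2 1)) := by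
    rw [← nhdsWithin_Ioo_eq_nhdsLT (by norm_num : (-1 : ℝ) < 1)]
    exact tendsto_nhdsWithin_mono_left Set.Ioo_subset_Icc_self
      (continuousOn_Li_two 1 (by norm_num))
  have hLi_zero : Tendsto (fun z => Li 2 (1 - z)) (𝓝[<] 1) (𝓝 (Li 2 0)) := by
    have hsub : Tendsto (fun z : ℝ => 1 - z) (𝓝[<] 1) (𝓝 0) := by
      simpa using ((continuous_sub_left (1 : ℝ)).tendsto 1).mono_left nhdsWithin_le_nhds
    exact (continuousOn_Li_two.continuousAt (Icc_mem_nhds (by norm_num) (by norm_num))).tendsto.comp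
      hsub
  simpa [Li_two_one, Li_two_zero] using
    (hLi_one.add hLi_zero).add (tendsto_log_mul_log_one_sub.mono_left nhdsWithin_le_nhds)

lemma Li_two_add_Li_two_neg_div_one_sub {x : ℝ} (hx : x ∈ Set.Ioo 0 (1 / 2)) :
    Li 2 x + Li 2 (-x / (1 - x)) + log (1 - x) ^ 2 / 2 = 0 := by
  refine eq_of_hasDerivAt_eq_zero_of_tendsto
    (f := fun z => Li 2 z + Li 2 (-z / (1 - z)) + log (1 - z) ^ 2 / 2)
    isOpen_Ioo isPreconnected_Ioo (fun y hy => hasDerivAt_Li_two_add_Li_two_neg_div_one_sub hy)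
    (Ioo_mem_nhdsGT (by norm_num : (0 : ℝ) < 1 / 2)) ?_ hx
  have hc : ContinuousAt (Li 2) 0 :=
    continuousOn_Li_two.continuousAt (Icc_mem_nhds (by norm_num) (by norm_num))
  have hcont : ContinuousAt (fun z => Li 2 z + Li 2 (-z / (1 - z)) + log (1 - z) ^ 2 / 2) 0 := by
    refine (hc.add (hc.comp_of_eq ?_ (by simp))).add ?_
    · exact continuousAt_id.neg.div (continuousAt_const.sub continuousAt_id) (by norm_num)
    · exact (((Real.continuousAt_log (by norm_num)).comp
        (continuousAt_const.sub continuousAt_id)).pow 2).div_const 2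
  simpa [Li_two_zero] using hcont.tendsto.mono_left nhdsWithin_le_nhds

theorem stmt7 :
    Li 2 (((Real.sqrt 5 - 1) / 2)) = π ^ 2 / 10 - Real.log (((Real.sqrt 5 - 1) / 2)) ^ 2 := by
  set φ : ℝ := (Real.sqrt 5 - 1) / 2 with hφ
  have h5 : Real.sqrt 5 ^ 2 = 5 := Real.sq_sqrt (by norm_num)
  have h2 : 2 < Real.sqrt 5 := by nlinarith [Real.sqrt_nonneg 5]
  have h3 : Real.sqrt 5 < 3 := by nlinarith [Real.sqrt_nonneg 5]
  have hφ0 : 0 < φ := by rw [hφ]; linarith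
  have hφ1 : φ < 1 := by rw [hφ]; linarith
  have hφsq : 1 - φ = φ ^ 2 := by rw [hφ]; linear_combination -h5 / 4
  have hlog : log (φ ^ 2) = 2 * log φ := by simp [Real.log_pow]
  have hrefl := Li_two_add_Li_two_one_sub ⟨hφ0, hφ1⟩
  have hlanden := Li_two_add_Li_two_neg_div_one_sub (x := φ ^ 2) ⟨by positivity, by linarith⟩
  have hφsq' : 1 - φ ^ 2 = φ := by linarith
  rw [show -φ ^ 2 / (1 - φ ^ 2) = -φ by rw [hφsq']; field_simp, hφsq'] at hlanden
  rw [hφsq, hlog] at hrefl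
  linarith [Li_two_sq (x := φ) (by rw [abs_of_pos hφ0]; linarith)]
end

section
/- For 0 < x < 1, Li_{2,1}(x) = ζ(3) - Li_3(1-x) + ln(1-x)*Li_2(1-x) + (1/2)*ln(x)*ln^2(1-x). -/
open Real Finset

/-!
Both sides vanish as `x → 0⁺` (here `ζ(3) = Li₃(1)` and `log x · log²(1 - x) → 0`), so it suffices
to compare derivatives on `(0, 1)`. Differentiating power series termwise gives
`x Li₍ₘ₊₁₎'(x) = Li_m(x)` with `Li₁(x) = -log(1 - x)`, and `x Li₂,₁'(x) = ∑ xⁿ⁺¹ Hₙ / (n + 1)`,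
which is `log²(1 - x) / 2` by squaring the series of `-log(1 - x)`. Both sides therefore have
derivative `log²(1 - x) / (2x)`.
-/

open Filter Topology Set

lemma H_le (n : ℕ) : H n ≤ n := by
  calc H n ≤ ∑ _k ∈ range n, (1 : ℝ) :=
        sum_le_sum fun k _ =>
          div_le_one_of_le₀ (by linarith [k.cast_nonneg (α := ℝ)]) (by positivity)
    _ = n := by simp

lemma abs_H_div_sq_le_one (n : ℕ) : |H n / ((n : ℝ) + 1) ^ 2| ≤ 1 := by
  have hH : 0 ≤ H n := sum_nonneg fun k _ => by positivity
  rw [abs_of_nonneg (by positivity), div_le_one (by positivity)]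
  nlinarith [H_le n, n.cast_nonneg (α := ℝ)]

lemma abs_one_div_pow_le_one (m n : ℕ) : |1 / ((n : ℝ) + 1) ^ m| ≤ 1 := by
  rw [abs_of_nonneg (by positivity), div_le_one (by positivity)]
  exact one_le_pow₀ (by linarith [n.cast_nonneg (α := ℝ)])

lemma summable_norm_pow_succ_mul {c : ℕ → ℝ} {C : ℝ} (hc : ∀ n, |c n| ≤ C) {x : ℝ}
    (hx : |x| < 1) : Summable fun n => ‖x ^ (n + 1) * c n‖ := by
  refine .of_nonneg_of_le (fun _ => norm_nonneg _) (fun n => ?_)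
    ((summable_geometric_of_lt_one (abs_nonneg x) hx).mul_left C)
  rw [norm_mul, norm_pow, Real.norm_eq_abs, Real.norm_eq_abs, mul_comm]
  exact mul_le_mul (hc n) (pow_le_pow_of_le_one (abs_nonneg x) hx.le n.le_succ) (by positivity)
    ((abs_nonneg _).trans (hc n))

lemma summable_succ_mul_geometric {r : ℝ} (hr : |r| < 1) :
    Summable fun n : ℕ => ((n : ℝ) + 1) * r ^ n := by
  have hr' : ‖r‖ < 1 := by rwa [Real.norm_eq_abs]
  exact ((summable_pow_mul_geometric_of_norm_lt_one 1 hr').add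
    (summable_geometric_of_norm_lt_one hr')).congr fun n => by ring

lemma hasDerivAt_tsum_pow_succ_mul {c : ℕ → ℝ} {C : ℝ} (hc : ∀ n, |c n| ≤ C) {x : ℝ}
    (hx : |x| < 1) :
    HasDerivAt (fun y => ∑' n, y ^ (n + 1) * c n) (∑' n : ℕ, ((n : ℝ) + 1) * x ^ n * c n) x := by
  obtain ⟨r, hxr, hr⟩ := exists_between hx
  have hr0 : 0 < r := (abs_nonneg x).trans_lt hxr
  replace hr : |r| < 1 := by rwa [abs_of_pos hr0]
  have mem_Ioo : ∀ {y : ℝ}, |y| < r → y ∈ Ioo (-r) r := fun hy => abs_lt.1 hy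
  refine hasDerivAt_tsum_of_isPreconnected ((summable_succ_mul_geometric hr).mul_left C)
    isOpen_Ioo isPreconnected_Ioo (g' := fun (n : ℕ) y => ((n : ℝ) + 1) * y ^ n * c n)
    (fun n y _ => ?_) (fun n y hy => ?_) (mem_Ioo (y := 0) (by rwa [abs_zero]))
    (by simp) (mem_Ioo hxr)
  · simpa using (hasDerivAt_pow (n + 1) y).mul_const (c n)
  · have hy : |y| ≤ r := abs_le.2 ⟨hy.1.le, hy.2.le⟩
    rw [Real.norm_eq_abs, abs_mul, abs_mul, abs_pow,
      abs_of_nonneg (by positivity : (0 : ℝ) ≤ n + 1)]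
    calc (n + 1) * |y| ^ n * |c n| ≤ (n + 1) * r ^ n * C :=
          mul_le_mul (by gcongr) (hc n) (abs_nonneg _) (by positivity)
      _ = C * ((n + 1) * r ^ n) := by ring

lemma hasDerivAt_tsum_pow_succ_mul_of_ne_zero {c : ℕ → ℝ} {C : ℝ} (hc : ∀ n, |c n| ≤ C)
    {x : ℝ} (hx : |x| < 1) (hx0 : x ≠ 0) :
    HasDerivAt (fun y => ∑' n, y ^ (n + 1) * c n)
      ((∑' n : ℕ, x ^ (n + 1) * (((n : ℝ) + 1) * c n)) / x) x := by
  convert hasDerivAt_tsum_pow_succ_mul hc hx using 1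
  rw [← tsum_div_const]
  congr 1 with n
  field_simp
  ring

lemma Li_eq_tsum (m : ℕ) : Li m = fun y => ∑' n : ℕ, y ^ (n + 1) * (1 / ((n : ℝ) + 1) ^ m) := by
  funext y
  simp only [Li, mul_one_div]

lemma Li_one {x : ℝ} (hx : |x| < 1) : Li 1 x = -log (1 - x) := by
  simpa [Li] using (hasSum_pow_div_log_of_abs_lt_one hx).tsum_eq

lemma hasDerivAt_Li_succ (m : ℕ) {x : ℝ} (hx : |x| < 1) (hx0 : x ≠ 0) :
    HasDerivAt (Li (m + 1)) (Li m x / x) x := by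
  rw [Li_eq_tsum]
  convert hasDerivAt_tsum_pow_succ_mul_of_ne_zero (abs_one_div_pow_le_one (m + 1)) hx hx0 using 2
  refine tsum_congr fun n => ?_
  field_simp
  ring

lemma continuousOn_Li {m : ℕ} (hm : 2 ≤ m) : ContinuousOn (Li m) (Icc (-1) 1) := by
  have hu : Summable fun n : ℕ => 1 / ((n : ℝ) + 1) ^ 2 := by
    exact_mod_cast (summable_nat_add_iff 1).2 (Real.summable_one_div_nat_pow.2 one_lt_two)
  refine continuousOn_tsum (fun n => (continuous_pow (n + 1)).div_const _ |>.continuousOn) hu ?_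
  intro n y hy
  rw [norm_div, norm_pow, Real.norm_eq_abs, Real.norm_of_nonneg (by positivity)]
  have hy : |y| ≤ 1 := abs_le.2 hy
  calc |y| ^ (n + 1) / ((n : ℝ) + 1) ^ m ≤ 1 / ((n : ℝ) + 1) ^ m := by
        gcongr; exact pow_le_one₀ (abs_nonneg y) hy
    _ ≤ 1 / ((n : ℝ) + 1) ^ 2 := by
        gcongr
        linarith [n.cast_nonneg (α := ℝ)]

lemma sum_antidiagonal_one_div_mul (n : ℕ) :
    ∑ kl ∈ antidiagonal n, 1 / (((kl.1 : ℝ) + 1) * ((kl.2 : ℝ) + 1))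
      = 2 * H (n + 1) / ((n : ℝ) + 2) := by
  have hH : ∑ kl ∈ antidiagonal n, 1 / ((kl.1 : ℝ) + 1) = H (n + 1) := by
    rw [Nat.sum_antidiagonal_eq_sum_range_succ_mk]
    rfl
  have hH' : ∑ kl ∈ antidiagonal n, 1 / ((kl.2 : ℝ) + 1) = H (n + 1) := by
    rw [← hH, ← Nat.sum_antidiagonal_swap]
    rfl
  -- partial fractions, using `(k + 1) + (l + 1) = n + 2`
  have hsplit : ∀ kl ∈ antidiagonal n, 1 / (((kl.1 : ℝ) + 1) * ((kl.2 : ℝ) + 1))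
      = 1 / ((n : ℝ) + 2) * (1 / ((kl.1 : ℝ) + 1) + 1 / ((kl.2 : ℝ) + 1)) := by
    intro kl hkl
    have hn : (kl.1 : ℝ) + kl.2 = n := by exact_mod_cast mem_antidiagonal.1 hkl
    field_simp
    linarith
  rw [sum_congr rfl hsplit, ← mul_sum, sum_add_distrib, hH, hH']
  ring

lemma hasSum_log_one_sub_sq {x : ℝ} (hx : |x| < 1) :
    HasSum (fun n : ℕ => x ^ (n + 1) * H n / ((n : ℝ) + 1)) (log (1 - x) ^ 2 / 2) := by
  set f : ℕ → ℝ := fun n => x ^ (n + 1) / ((n : ℝ) + 1)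
  have hf : Summable fun n => ‖f n‖ := by
    simpa only [f, pow_one, div_eq_mul_one_div (x ^ _)] using
      summable_norm_pow_succ_mul (abs_one_div_pow_le_one 1) hx
  have hsq : HasSum (fun n => ∑ kl ∈ antidiagonal n, f kl.1 * f kl.2) (log (1 - x) ^ 2) := by
    have := (summable_norm_sum_mul_antidiagonal_of_summable_norm hf hf).of_norm.hasSum
    rwa [← tsum_mul_tsum_eq_tsum_sum_antidiagonal_of_summable_norm hf hf,
      (hasSum_pow_div_log_of_abs_lt_one hx).tsum_eq, neg_mul_neg, ← sq] at this
  have hterm : ∀ n : ℕ, (∑ kl ∈ antidiagonal n, f kl.1 * f kl.2) / 2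
      = x ^ (n + 1 + 1) * H (n + 1) / ((n + 1 : ℕ) + 1 : ℝ) := by
    intro n
    have hmul : ∀ kl ∈ antidiagonal n,
        f kl.1 * f kl.2 = x ^ (n + 2) * (1 / (((kl.1 : ℝ) + 1) * ((kl.2 : ℝ) + 1))) := by
      intro kl hkl
      rw [← mem_antidiagonal.1 hkl]
      simp only [f]
      rw [div_mul_div_comm, mul_one_div]
      ring
    rw [sum_congr rfl hmul, ← mul_sum, sum_antidiagonal_one_div_mul]
    push_cast
    ring
  have hshift := hsq.div_const 2
  simp only [hterm] at hshift
  simpa [H] using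
    (hasSum_nat_add_iff (f := fun n : ℕ => x ^ (n + 1) * H n / ((n : ℝ) + 1)) 1).1 hshift

lemma Li21_eq_tsum : Li21 = fun y => ∑' n : ℕ, y ^ (n + 1) * (H n / ((n : ℝ) + 1) ^ 2) := by
  funext y
  simp only [Li21, mul_div_assoc]

lemma hasDerivAt_Li21 {x : ℝ} (hx : |x| < 1) (hx0 : x ≠ 0) :
    HasDerivAt Li21 (log (1 - x) ^ 2 / 2 / x) x := by
  rw [Li21_eq_tsum, ← (hasSum_log_one_sub_sq hx).tsum_eq]
  convert hasDerivAt_tsum_pow_succ_mul_of_ne_zero abs_H_div_sq_le_one hx hx0 using 2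
  refine tsum_congr fun n => ?_
  field_simp

lemma eqOn_Ioo_of_hasDerivAt_of_tendsto {f g f' : ℝ → ℝ} {a b l : ℝ}
    (hf : ∀ x ∈ Ioo a b, HasDerivAt f (f' x) x) (hg : ∀ x ∈ Ioo a b, HasDerivAt g (f' x) x)
    (hfa : Tendsto f (𝓝[>] a) (𝓝 l)) (hga : Tendsto g (𝓝[>] a) (𝓝 l)) :
    EqOn f g (Ioo a b) := by
  intro x hx
  have hconst : ∀ y ∈ Ioo a b, (f - g) y = (f - g) x := fun y hy =>
    isOpen_Ioo.is_const_of_deriv_eq_zero isPreconnected_Ioo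
      (fun z hz => ((hf z hz).sub (hg z hz)).differentiableAt.differentiableWithinAt)
      (fun z hz => by simp [((hf z hz).sub (hg z hz)).deriv]) hy hx
  have hlim : Tendsto (f - g) (𝓝[>] a) (𝓝 ((f - g) x)) :=
    tendsto_const_nhds.congr' <| eventually_of_mem (Ioo_mem_nhdsGT (hx.1.trans hx.2))
      fun y hy => (hconst y hy).symm
  exact sub_eq_zero.1 <| tendsto_nhds_unique hlim (sub_self l ▸ hfa.sub hga)

lemma tendsto_log_mul_log_one_sub_sq :
    Tendsto (fun y => log y * log (1 - y) ^ 2) (𝓝[>] 0) (𝓝 0) := by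
  have hlog : HasDerivAt (fun y => log (1 - y)) (-1) 0 := by
    simpa using ((hasDerivAt_id (0 : ℝ)).const_sub 1).log (by norm_num)
  have hslope : Tendsto (fun y => y⁻¹ * log (1 - y)) (𝓝[>] 0) (𝓝 (-1)) := by
    simpa using (hasDerivAt_iff_tendsto_slope_zero.1 hlog).mono_left (nhdsGT_le_nhdsNE 0)
  have hmul_log : Tendsto (fun y => y * log y) (𝓝[>] 0) (𝓝 0) := by
    simpa using continuous_mul_log.tendsto 0 |>.mono_left nhdsWithin_le_nhds
  -- `log y · log²(1 - y) = (y log y) · (log (1 - y) / y) · log (1 - y)`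
  have := (hmul_log.mul hslope).mul (hlog.continuousAt.tendsto.mono_left nhdsWithin_le_nhds)
  simp only [sub_zero, log_one, mul_zero] at this
  refine this.congr' (eventually_mem_nhdsWithin.mono fun y (hy : 0 < y) => ?_)
  field_simp

lemma tendsto_Li21_nhdsGT_zero : Tendsto Li21 (𝓝[>] 0) (𝓝 0) := by
  have := (hasDerivAt_tsum_pow_succ_mul abs_H_div_sq_le_one (x := 0) (by simp)).continuousAt
  rw [Li21_eq_tsum]
  simpa using this.tendsto.mono_left nhdsWithin_le_nhds

lemma tendsto_Li_one_sub {m : ℕ} (hm : 2 ≤ m) :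
    Tendsto (fun y => Li m (1 - y)) (𝓝[>] 0) (𝓝 (Li m 1)) := by
  refine (continuousOn_Li hm 1 ⟨by norm_num, le_rfl⟩).tendsto.comp
    (tendsto_nhdsWithin_iff.2 ⟨?_, ?_⟩)
  · exact ((continuous_sub_left 1).tendsto' 0 1 (sub_zero 1)).mono_left nhdsWithin_le_nhds
  · filter_upwards [Ioo_mem_nhdsGT (show (0 : ℝ) < 2 by norm_num)] with y hy
    exact ⟨by linarith [hy.2], by linarith [hy.1]⟩

lemma Li_three_one : Li 3 1 = zeta3 := by
  simp [Li, zeta3]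

lemma tendsto_Li21_closedForm :
    Tendsto (fun y => zeta3 - Li 3 (1 - y) + log (1 - y) * Li 2 (1 - y) +
      1 / 2 * log y * log (1 - y) ^ 2) (𝓝[>] 0) (𝓝 0) := by
  have hlog : Tendsto (fun y => log (1 - y)) (𝓝[>] 0) (𝓝 0) := by
    have := ((continuous_sub_left (1 : ℝ)).tendsto' 0 1 (sub_zero 1)).log one_ne_zero
    simpa using this.mono_left nhdsWithin_le_nhds
  have := ((tendsto_const_nhds (x := zeta3)).sub (tendsto_Li_one_sub (m := 3) (by norm_num))).add
    (hlog.mul (tendsto_Li_one_sub (m := 2) le_rfl)) |>.add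
    (tendsto_log_mul_log_one_sub_sq.const_mul (1 / 2))
  simpa [Li_three_one, mul_assoc] using this

lemma hasDerivAt_Li21_closedForm {y : ℝ} (hy0 : 0 < y) (hy1 : y < 1) :
    HasDerivAt (fun y => zeta3 - Li 3 (1 - y) + log (1 - y) * Li 2 (1 - y) +
      1 / 2 * log y * log (1 - y) ^ 2) (log (1 - y) ^ 2 / 2 / y) y := by
  have h1y : |1 - y| < 1 := by rw [abs_lt]; constructor <;> linarith
  have hne : 1 - y ≠ 0 := by linarith
  have hsub : HasDerivAt (fun y => 1 - y) (-1) y := by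
    simpa using (hasDerivAt_id y).const_sub 1
  have hLi3 : HasDerivAt (Li 3) (Li 2 (1 - y) / (1 - y)) (1 - y) := hasDerivAt_Li_succ 2 h1y hne
  have hLi2 : HasDerivAt (Li 2) (Li 1 (1 - y) / (1 - y)) (1 - y) := hasDerivAt_Li_succ 1 h1y hne
  rw [Li_one h1y, sub_sub_cancel] at hLi2
  refine ((((hasDerivAt_const y zeta3).sub (hLi3.comp y hsub)).add
    ((hsub.log hne).mul (hLi2.comp y hsub))).add
    (((hasDerivAt_log hy0.ne').const_mul (1 / 2)).mul ((hsub.log hne).pow 2))).congr_deriv ?_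
  simp only [Function.comp_apply, Pi.pow_apply]
  field_simp
  ring

theorem stmt11 (x : ℝ) (hx0 : 0 < x) (hx1 : x < 1) :
    Li21 x = zeta3 - Li 3 (1 - x) + Real.log (1 - x) * Li 2 (1 - x) +
      1 / 2 * Real.log x * Real.log (1 - x) ^ 2 := by
  refine eqOn_Ioo_of_hasDerivAt_of_tendsto (fun y hy => ?_)
    (fun y hy => hasDerivAt_Li21_closedForm hy.1 hy.2) tendsto_Li21_nhdsGT_zero
    tendsto_Li21_closedForm ⟨hx0, hx1⟩
  exact hasDerivAt_Li21 (by rw [abs_lt]; constructor <;> linarith [hy.1, hy.2]) hy.1.ne'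
end

section
/- For a, b ≥ 1 and 0 < z < 1, the Nielsen polylogarithm S_{a,b}(z) := ((-1)^(a-1+b) / ((a-1)! b!)) * ∫_0^1 (ln^(a-1)(t) * ln^b(1 - z t) / t) dt equals the multiple polylogarithm Li_{a+1, 1, ..., 1}(z) (with b-1 trailing ones), i.e., ∑_{n_1 > n_2 > ... > n_b ≥ 1} z^{n_1} / (n_1^{a+1} * n_2 * ... * n_b). -/
open Real Finset

noncomputable def MH : ℕ → ℕ → ℝ
  | 0, _ => 1
  | (d + 1), n => ∑ k ∈ Finset.range n, MH d k / (k : ℝ)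

/-!
Substituting `t = e^{-u}` turns the integral into
`(-1)^(a-1) ∫_0^∞ u^(a-1) log^b(1 - z e^{-u}) du`.
With `MH d n = ∑_{n > k_1 > ⋯ > k_d ≥ 1} 1/(k_1 ⋯ k_d)`, the generating function identity
`∑_{n ≥ 1} MH (b-1) n x^n / n = (-log(1-x))^b / b!` holds for `|x| < 1`, by induction on `b`:
both sides vanish at `0`, and the recursion `MH b (n+1) - MH b n = MH (b-1) n / n` shows that
they have the same derivative. Expanding `log^b(1 - z e^{-u})` with it and integrating term by
term against `∫_0^∞ u^k e^{-(m+1)u} du = k!/(m+1)^(k+1)` gives the series.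
-/

open MeasureTheory
open scoped Nat

lemma MH_nonneg (d n : ℕ) : 0 ≤ MH d n := by
  induction d generalizing n with
  | zero => exact zero_le_one
  | succ d ih => exact Finset.sum_nonneg fun k _ => div_nonneg (ih k) k.cast_nonneg

lemma MH_succ_succ (d n : ℕ) : MH (d + 1) (n + 1) = MH (d + 1) n + MH d n / n :=
  Finset.sum_range_succ _ _

lemma MH_le_pow (d n : ℕ) : MH d n ≤ (n : ℝ) ^ d := by
  induction d generalizing n with
  | zero => exact le_of_eq (pow_zero _).symm
  | succ d ih =>
    calc MH (d + 1) n ≤ ∑ k ∈ Finset.range n, (n : ℝ) ^ d := by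
          refine Finset.sum_le_sum fun k hk => ?_
          have hkn : (k : ℝ) ≤ n := by exact_mod_cast (Finset.mem_range.mp hk).le
          have hdiv : MH d k / k ≤ MH d k := by
            rcases k.eq_zero_or_pos with rfl | hk
            · simpa using MH_nonneg d 0
            · exact div_le_self (MH_nonneg d k) (by exact_mod_cast hk)
          calc MH d k / k ≤ MH d k := hdiv
            _ ≤ (k : ℝ) ^ d := ih k
            _ ≤ (n : ℝ) ^ d := pow_le_pow_left₀ k.cast_nonneg hkn d
      _ = (n : ℝ) ^ (d + 1) := by
          rw [Finset.sum_const, Finset.card_range, nsmul_eq_mul, pow_succ']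

lemma abs_MH_succ_le (d m : ℕ) : |MH d (m + 1)| ≤ ((m : ℝ) + 1) ^ d := by
  rw [abs_of_nonneg (MH_nonneg d _)]
  exact_mod_cast MH_le_pow d (m + 1)

lemma summable_succ_pow_mul_geometric (d : ℕ) {r : ℝ} (hr : |r| < 1) :
    Summable fun m : ℕ => ((m : ℝ) + 1) ^ d * r ^ m := by
  simp_rw [add_pow, one_pow, mul_one, Finset.sum_mul]
  exact summable_sum fun j _ => ((summable_pow_mul_geometric_of_norm_lt_one j hr).mul_right
    (d.choose j : ℝ)).congr fun m => by ring

section PolynomiallyBounded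

variable {c : ℕ → ℝ} {d : ℕ}

lemma summable_mul_pow_of_abs_le (hc : ∀ m, |c m| ≤ ((m : ℝ) + 1) ^ d) {x : ℝ}
    (hx : |x| < 1) : Summable fun m => c m * x ^ m :=
  (summable_succ_pow_mul_geometric d (by rwa [abs_abs])).of_norm_bounded fun m => by
    rw [Real.norm_eq_abs, abs_mul, abs_pow]
    exact mul_le_mul_of_nonneg_right (hc m) (by positivity)

lemma summable_pow_succ_mul_div_of_abs_le (hc : ∀ m, |c m| ≤ ((m : ℝ) + 1) ^ d) {x : ℝ}
    (hx : |x| < 1) : Summable fun m : ℕ => x ^ (m + 1) * c m / ((m : ℝ) + 1) := by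
  have hc' (m : ℕ) : |c m / ((m : ℝ) + 1)| ≤ ((m : ℝ) + 1) ^ d := by
    rw [abs_div, abs_of_pos (Nat.cast_add_one_pos (α := ℝ) m)]
    exact (div_le_self (abs_nonneg _) (by simp)).trans (hc m)
  exact ((summable_mul_pow_of_abs_le hc' hx).mul_left x).congr fun m => by ring

lemma hasDerivAt_tsum_pow_succ_mul_div (hc : ∀ m, |c m| ≤ ((m : ℝ) + 1) ^ d) {y : ℝ}
    (hy : |y| < 1) :
    HasDerivAt (fun u => ∑' m : ℕ, u ^ (m + 1) * c m / ((m : ℝ) + 1))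
      (∑' m, c m * y ^ m) y := by
  obtain ⟨r, hyr, hr1⟩ := exists_between hy
  have hr0 : 0 < r := (abs_nonneg y).trans_lt hyr
  refine hasDerivAt_tsum_of_isPreconnected (g := fun m u => u ^ (m + 1) * c m / ((m : ℝ) + 1))
    (g' := fun m u => c m * u ^ m) (summable_succ_pow_mul_geometric d
      (by rwa [abs_of_pos hr0])) Metric.isOpen_ball (convex_ball (0 : ℝ) r).isPreconnected
    (fun m w _ => ?_) (fun m w hw => ?_) (Metric.mem_ball_self hr0) ?_
    (by rwa [Metric.mem_ball, dist_zero_right])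
  · refine (((hasDerivAt_pow (m + 1) w).mul_const (c m)).div_const ((m : ℝ) + 1)).congr_deriv ?_
    push_cast
    field_simp
  · rw [Metric.mem_ball, dist_zero_right] at hw
    rw [Real.norm_eq_abs, abs_mul, abs_pow]
    exact mul_le_mul (hc m) (pow_le_pow_left₀ (abs_nonneg w) hw.le m) (by positivity)
      (by positivity)
  · simp

end PolynomiallyBounded

lemma hasSum_pow_succ_mul_MH_div_one_sub_mul_tsum (d : ℕ) {x : ℝ} (hx : |x| < 1) :
    HasSum (fun m : ℕ => x ^ (m + 1) * MH d (m + 1) / ((m : ℝ) + 1))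
      ((1 - x) * ∑' m, MH (d + 1) (m + 1) * x ^ m) := by
  set S := ∑' m, MH (d + 1) (m + 1) * x ^ m
  have hS : HasSum (fun m => MH (d + 1) (m + 1) * x ^ m) S :=
    (summable_mul_pow_of_abs_le (abs_MH_succ_le (d + 1)) hx).hasSum
  have hxS : HasSum (fun m => MH (d + 1) m * x ^ m) (x * S) := by
    rw [← hasSum_nat_add_iff' 1, Finset.sum_range_one,
      show MH (d + 1) 0 = 0 from sum_range_zero _, zero_mul, sub_zero]
    exact (hS.mul_left x).congr_fun fun m => by ring
  have hdiff : HasSum (fun m => MH d m / m * x ^ m) (S - x * S) :=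
    (hS.sub hxS).congr_fun fun m => by rw [← sub_mul, MH_succ_succ, add_sub_cancel_left]
  -- the `m = 0` term `MH d 0 / 0` is `0` by the convention `x / 0 = 0`
  rw [← hasSum_nat_add_iff' 1, Finset.sum_range_one, CharP.cast_eq_zero, div_zero, zero_mul,
    sub_zero] at hdiff
  rw [sub_mul, one_mul]
  exact hdiff.congr_fun fun m => by push_cast; ring

lemma hasDerivAt_neg_log_one_sub_pow_div_factorial (d : ℕ) {y : ℝ} (hy : y < 1) :
    HasDerivAt (fun u => (-log (1 - u)) ^ (d + 1) / (d + 1)!)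
      ((-log (1 - y)) ^ d / d ! / (1 - y)) y := by
  have hlog : HasDerivAt (fun u => -log (1 - u)) (1 - y)⁻¹ y := by
    refine (((hasDerivAt_id' y).const_sub 1).log (sub_pos.2 hy).ne').neg.congr_deriv ?_
    rw [neg_div, neg_neg, one_div]
  refine ((hlog.pow (d + 1)).div_const _).congr_deriv ?_
  rw [Nat.factorial_succ]
  push_cast
  field_simp

theorem hasSum_pow_succ_mul_MH_div (d : ℕ) {x : ℝ} (hx : |x| < 1) :
    HasSum (fun m : ℕ => x ^ (m + 1) * MH d (m + 1) / ((m : ℝ) + 1))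
      ((-log (1 - x)) ^ (d + 1) / (d + 1)!) := by
  induction d generalizing x with
  | zero => simpa [MH] using Real.hasSum_pow_div_log_of_abs_lt_one hx
  | succ d ih =>
    refine (summable_pow_succ_mul_div_of_abs_le (abs_MH_succ_le (d + 1)) hx).hasSum_iff.2 ?_
    have hderiv (y : ℝ) (hy : y ∈ Set.Ioo (-1 : ℝ) 1) :
        HasDerivAt (fun u => ∑' m : ℕ, u ^ (m + 1) * MH (d + 1) (m + 1) / ((m : ℝ) + 1))
          ((-log (1 - y)) ^ (d + 1) / (d + 1)! / (1 - y)) y := by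
      have hy' : |y| < 1 := abs_lt.2 hy
      have h1y : 1 - y ≠ 0 := (sub_pos.2 hy.2).ne'
      refine (hasDerivAt_tsum_pow_succ_mul_div (abs_MH_succ_le (d + 1)) hy').congr_deriv ?_
      rw [(ih hy').unique (hasSum_pow_succ_mul_MH_div_one_sub_mul_tsum d hy'),
        mul_div_cancel_left₀ _ h1y]
    have hlog (y : ℝ) (hy : y ∈ Set.Ioo (-1 : ℝ) 1) :=
      hasDerivAt_neg_log_one_sub_pow_div_factorial (d + 1) hy.2
    refine isOpen_Ioo.eqOn_of_deriv_eq isPreconnected_Ioo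
      (fun y hy => (hderiv y hy).differentiableAt.differentiableWithinAt)
      (fun y hy => (hlog y hy).differentiableAt.differentiableWithinAt)
      (fun y hy => (hderiv y hy).deriv.trans (hlog y hy).deriv.symm)
      (show (0 : ℝ) ∈ Set.Ioo (-1) 1 by norm_num) (by simp) (abs_lt.1 hx)

lemma hasSum_log_one_sub_mul_exp_neg_pow (c : ℕ) {z u : ℝ} (hz : |z| < 1) (hu : 0 ≤ u) :
    HasSum (fun m : ℕ => (-1) ^ (c + 1) * (c + 1)! *
        (z ^ (m + 1) * MH c (m + 1) / ((m : ℝ) + 1)) * exp (-(((m : ℝ) + 1) * u)))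
      (log (1 - z * exp (-u)) ^ (c + 1)) := by
  have hx : |z * exp (-u)| < 1 := by
    rw [abs_mul, abs_exp]
    exact (mul_le_of_le_one_right (abs_nonneg z) (exp_le_one_iff.2 (neg_nonpos.2 hu))).trans_lt hz
  have hval : log (1 - z * exp (-u)) ^ (c + 1) =
      (-1) ^ (c + 1) * (c + 1)! * ((-log (1 - z * exp (-u))) ^ (c + 1) / (c + 1)!) := by
    field_simp
    rw [← mul_pow, neg_one_mul, neg_neg]
  rw [hval]
  refine ((hasSum_pow_succ_mul_MH_div c hx).mul_left _).congr_fun fun m => ?_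
  rw [mul_pow, ← exp_nat_mul, Nat.cast_add_one, mul_neg]
  ring

lemma image_exp_neg_Ioi_zero : (fun u : ℝ => exp (-u)) '' Set.Ioi 0 = Set.Ioo 0 1 := by
  rw [show (fun u : ℝ => exp (-u)) = exp ∘ Neg.neg from rfl, Set.image_comp, Set.image_neg_Ioi,
    neg_zero, image_exp_Iio, exp_zero]

lemma integral_Ioo_zero_one_eq_integral_Ioi_exp_neg (f : ℝ → ℝ) :
    ∫ t in Set.Ioo 0 1, f t = ∫ u in Set.Ioi 0, exp (-u) * f (exp (-u)) := by
  rw [← image_exp_neg_Ioi_zero, integral_image_eq_integral_abs_deriv_smul measurableSet_Ioi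
    (fun u _ => (hasDerivAt_neg u).exp.hasDerivWithinAt)
    (fun u _ v _ h => neg_injective (exp_injective h))]
  simp [abs_of_pos (exp_pos _)]

lemma integral_log_pow_mul_div_eq_integral_Ioi (k : ℕ) (g : ℝ → ℝ) :
    ∫ t in (0 : ℝ)..1, log t ^ k * g t / t =
      (-1) ^ k * ∫ u in Set.Ioi 0, u ^ k * g (exp (-u)) := by
  rw [intervalIntegral.integral_of_le zero_le_one, integral_Ioc_eq_integral_Ioo,
    integral_Ioo_zero_one_eq_integral_Ioi_exp_neg, ← integral_const_mul]
  refine setIntegral_congr_fun measurableSet_Ioi fun u _ => ?_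
  rw [log_exp, neg_pow]
  field_simp

lemma integral_pow_mul_exp_neg_mul_Ioi (k : ℕ) {r : ℝ} (hr : 0 < r) :
    ∫ u in Set.Ioi 0, u ^ k * exp (-(r * u)) = k ! / r ^ (k + 1) := by
  have h := integral_rpow_mul_exp_neg_mul_Ioi (a := k + 1) (by positivity) hr
  simp only [add_sub_cancel_right, rpow_natCast] at h
  rw [h, Gamma_nat_eq_factorial, ← Nat.cast_add_one, rpow_natCast, one_div, inv_pow,
    inv_mul_eq_div]

lemma integrableOn_pow_mul_exp_neg_mul_Ioi (k : ℕ) {r : ℝ} (hr : 0 < r) :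
    IntegrableOn (fun u => u ^ k * exp (-(r * u))) (Set.Ioi 0) := by
  simpa [rpow_natCast] using integrableOn_rpow_mul_exp_neg_mul_rpow (s := k) (p := 1)
    (by linarith [k.cast_nonneg (α := ℝ)]) one_pos hr

lemma integral_Ioi_pow_mul_tsum_mul_exp_neg (k : ℕ) {a : ℕ → ℝ} (ha : Summable a) :
    ∫ u in Set.Ioi 0, u ^ k * ∑' m, a m * exp (-(((m : ℝ) + 1) * u)) =
      ∑' m, a m * (k ! / ((m : ℝ) + 1) ^ (k + 1)) := by
  have hint (m : ℕ) : Integrable (fun u => a m * (u ^ k * exp (-(((m : ℝ) + 1) * u))))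
      (volume.restrict (Set.Ioi 0)) :=
    (integrableOn_pow_mul_exp_neg_mul_Ioi k (by positivity)).const_mul (a m)
  have hnorm (m : ℕ) : ∫ u in Set.Ioi 0, ‖a m * (u ^ k * exp (-(((m : ℝ) + 1) * u)))‖ =
      |a m| * (k ! / ((m : ℝ) + 1) ^ (k + 1)) := by
    rw [← integral_pow_mul_exp_neg_mul_Ioi k (by positivity), ← integral_const_mul]
    refine setIntegral_congr_fun measurableSet_Ioi fun u (hu : 0 < u) => ?_
    rw [norm_mul, Real.norm_eq_abs, Real.norm_eq_abs, abs_mul, abs_pow, abs_of_pos hu, abs_exp]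
  simp_rw [← tsum_mul_left, mul_left_comm _ (a _)]
  rw [← integral_tsum_of_summable_integral_norm hint]
  · simp_rw [integral_const_mul, integral_pow_mul_exp_neg_mul_Ioi k (Nat.cast_add_one_pos _)]
  · simp_rw [hnorm]
    refine Summable.of_nonneg_of_le (fun m => by positivity) (fun m => ?_)
      (ha.abs.mul_right (k ! : ℝ))
    exact mul_le_mul_of_nonneg_left (div_le_self (by positivity)
      (one_le_pow₀ (by linarith [m.cast_nonneg (α := ℝ)]))) (abs_nonneg _)

theorem stmt17 (a b : ℕ) (ha : 1 ≤ a) (hb : 1 ≤ b) (z : ℝ)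
    (hz0 : 0 < z) (hz1 : z < 1) :
    (-1 : ℝ) ^ (a - 1 + b) / ((Nat.factorial (a - 1) : ℝ) * (Nat.factorial b : ℝ)) *
        ∫ t in (0 : ℝ)..1, Real.log t ^ (a - 1) * Real.log (1 - z * t) ^ b / t =
      ∑' n : ℕ, z ^ (n + 1) * MH (b - 1) (n + 1) / ((n : ℝ) + 1) ^ (a + 1) := by
  obtain ⟨k, rfl⟩ := Nat.exists_eq_add_of_le' ha
  obtain ⟨c, rfl⟩ := Nat.exists_eq_add_of_le' hb
  simp only [Nat.add_sub_cancel]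
  have hz : |z| < 1 := by rwa [abs_of_pos hz0]
  set coeff : ℕ → ℝ :=
    fun m => (-1) ^ (c + 1) * (c + 1)! * (z ^ (m + 1) * MH c (m + 1) / ((m : ℝ) + 1))
  have hcoeff : Summable coeff :=
    (hasSum_pow_succ_mul_MH_div c hz).summable.mul_left ((-1 : ℝ) ^ (c + 1) * (c + 1)!)
  have hsign : (-1 : ℝ) ^ (k + (c + 1)) * ((-1) ^ k * (-1) ^ (c + 1)) = 1 := by
    rw [← pow_add, ← pow_add]
    exact Even.neg_one_pow ⟨k + (c + 1), rfl⟩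
  rw [integral_log_pow_mul_div_eq_integral_Ioi, setIntegral_congr_fun measurableSet_Ioi
    fun u (hu : 0 < u) => by rw [← (hasSum_log_one_sub_mul_exp_neg_pow c hz hu.le).tsum_eq],
    integral_Ioi_pow_mul_tsum_mul_exp_neg k hcoeff, ← tsum_mul_left, ← tsum_mul_left]
  refine tsum_congr fun m => ?_
  simp only [coeff]
  field_simp
  linear_combination (MH c (m + 1) * ((m : ℝ) + 1) ^ (k + 1 + 1)) * hsign
end
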